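/- (Lemma 13: derivative of the orthogonal projection matrix.) Let Γ ∈ ℝ^{p×d} have full column rank d ≤ p (equivalently, ΓᵀΓ is invertible). The map g : ℝ^{p×d} → ℝ^{p×p}, g(M) := M(MᵀM)⁻¹Mᵀ, is Fréchet differentiable at Γ, and its derivative applied to a direction E ∈ ℝ^{p×d} is Dg(Γ)[E] = Q_Γ E (ΓᵀΓ)⁻¹ Γᵀ + Γ (ΓᵀΓ)⁻¹ Eᵀ Q_Γ, where Q_Γ := I_p − Γ(ΓᵀΓ)⁻¹Γᵀ. Equivalently, in vec coordinates, ∂vec(P_Γ)/∂vecᵀ(Γ) = (I_{p²} + K_{pp})(Γ(ΓᵀΓ)⁻¹ ⊗ Q_Γ), where K_{pp} is the commutation matrix with vec(Mᵀ) = K_{pp} vec(M). -/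

import Mathlib

/-!
With `A = (ΓᵀΓ)⁻¹`, the map `M ↦ M (MᵀM)⁻¹ Mᵀ` is built from transposes, matrix products and
matrix inversion, whose derivative at an invertible `X` is `H ↦ -X⁻¹ H X⁻¹`. The Leibniz and
chain rules give the derivative `E ↦ Γ A Eᵀ + (E A - Γ A (ΓᵀE + EᵀΓ) A) Γᵀ`; collecting the terms
with `E` on the left and those with `Eᵀ` yields `Q E A Γᵀ + Γ A Eᵀ Q` with `Q = 1 - Γ A Γᵀ`.
-/

open Matrix Asymptotics Filter Topology

attribute [local instance] Matrix.normedAddCommGroup Matrix.normedSpace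

theorem ContinuousLinearMap.isLittleO_apply_of_tendsto_zero {𝕜 α F G H : Type*}
    [NontriviallyNormedField 𝕜]
    [NormedAddCommGroup F] [NormedSpace 𝕜 F] [NormedAddCommGroup G] [NormedSpace 𝕜 G]
    [NormedAddCommGroup H] [NormedSpace 𝕜 H]
    (B : F →L[𝕜] G →L[𝕜] H) {l : Filter α} (f : α → F) {g : α → G}
    (hg : Tendsto g l (𝓝 0)) : (fun x => B (f x) (g x)) =o[l] f := by
  have hg' : (fun x => ‖g x‖) =o[l] fun _ => (1 : ℝ) :=
    (isLittleO_one_iff ℝ).2 (by simpa using hg.norm)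
  have hB := (B.isBoundedBilinearMap.isBigO_comp (g := f) (h := g)).trans_isLittleO
    ((isBigO_refl (fun x => ‖f x‖) l).mul_isLittleO hg')
  simp only [mul_one] at hB
  exact hB.trans_isBigO (isBigO_norm_left.2 (isBigO_refl f l))

section MatrixCalculus

variable {𝕜 : Type*} [NontriviallyNormedField 𝕜] [CompleteSpace 𝕜]
  {l m n : Type*} [Fintype l] [Fintype m] [Fintype n]
  {E : Type*} [NormedAddCommGroup E] [NormedSpace 𝕜 E]

variable (𝕜 l m n) in
noncomputable def Matrix.mulCLM : Matrix l m 𝕜 →L[𝕜] Matrix m n 𝕜 →L[𝕜] Matrix l n 𝕜 :=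
  LinearMap.toContinuousLinearMap
    (LinearMap.toContinuousLinearMap.toLinearMap ∘ₗ mulLinearMap 𝕜)

variable (l) in
noncomputable def Matrix.mulRightCLM (Y : Matrix m n 𝕜) : Matrix l m 𝕜 →L[𝕜] Matrix l n 𝕜 :=
  LinearMap.toContinuousLinearMap (mulRightLinearMap l 𝕜 Y)

variable (𝕜 m n) in
noncomputable def Matrix.transposeCLM : Matrix m n 𝕜 →L[𝕜] Matrix n m 𝕜 :=
  LinearMap.toContinuousLinearMap (transposeLinearEquiv m n 𝕜 𝕜).toLinearMap

theorem HasFDerivAt.matrix_mul {f : E → Matrix l m 𝕜} {g : E → Matrix m n 𝕜}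
    {f' : E →L[𝕜] Matrix l m 𝕜} {g' : E →L[𝕜] Matrix m n 𝕜} {x : E}
    (hf : HasFDerivAt f f' x) (hg : HasFDerivAt g g' x) :
    HasFDerivAt (fun y => f y * g y)
      ((mulCLM 𝕜 l m n (f x)).comp g' + (mulRightCLM l (g x)).comp f') x :=
  (mulCLM 𝕜 l m n).hasFDerivAt_of_bilinear hf hg

theorem HasFDerivAt.matrix_transpose {f : E → Matrix m n 𝕜} {f' : E →L[𝕜] Matrix m n 𝕜} {x : E}
    (hf : HasFDerivAt f f' x) :
    HasFDerivAt (fun y => (f y)ᵀ) ((transposeCLM 𝕜 m n).comp f') x :=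
  (transposeCLM 𝕜 m n).hasFDerivAt.comp x hf

theorem hasFDerivAt_matrix_inv [DecidableEq n] {A : Matrix n n 𝕜} (hA : IsUnit A.det) :
    HasFDerivAt (fun X : Matrix n n 𝕜 => X⁻¹)
      (-(mulCLM 𝕜 n n n A⁻¹).comp (mulRightCLM n A⁻¹)) A := by
  have htendsto : Tendsto (fun X : Matrix n n 𝕜 => A⁻¹ - X⁻¹) (𝓝 A) (𝓝 0) := by
    have : ContinuousAt Ring.inverse A.det := by
      rw [Ring.inverse_eq_inv']
      exact continuousAt_inv₀ (isUnit_iff_ne_zero.1 hA)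
    simpa using (tendsto_const_nhds (x := A⁻¹)).sub (continuousAt_matrix_inv A this)
  -- The remainder is bilinear in `X - A` and `A⁻¹ - X⁻¹`, and the latter tends to `0`.
  have hremainder : ∀ᶠ X in 𝓝 A,
      A⁻¹ * (X - A) * (A⁻¹ - X⁻¹) = X⁻¹ - A⁻¹ - -(A⁻¹ * ((X - A) * A⁻¹)) := by
    filter_upwards [continuous_id.matrix_det.continuousAt.eventually_ne (isUnit_iff_ne_zero.1 hA)]
      with X hX
    simp only [Matrix.mul_sub, Matrix.sub_mul, Matrix.mul_assoc,
      mul_nonsing_inv X (isUnit_iff_ne_zero.2 hX), nonsing_inv_mul_cancel_left _ _ hA,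
      Matrix.mul_one, sub_neg_eq_add]
    abel
  exact hasFDerivAt_iff_isLittleO.2 <|
    (((mulCLM 𝕜 n n n).comp (mulCLM 𝕜 n n n A⁻¹)).isLittleO_apply_of_tendsto_zero
      (fun X => X - A) htendsto).congr' hremainder (.refl _ _)

theorem HasFDerivAt.matrix_inv [DecidableEq n] {f : E → Matrix n n 𝕜}
    {f' : E →L[𝕜] Matrix n n 𝕜} {x : E} (hf : HasFDerivAt f f' x) (hx : IsUnit (f x).det) :
    HasFDerivAt (fun y => (f y)⁻¹)
      (-(mulCLM 𝕜 n n n (f x)⁻¹).comp ((mulRightCLM n (f x)⁻¹).comp f')) x :=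
  (hasFDerivAt_matrix_inv hx).comp x hf

end MatrixCalculus

namespace Stmt9

theorem statement9 {p d : ℕ}
    (Γ : Matrix (Fin p) (Fin d) ℝ) (hrank : IsUnit (Γᵀ * Γ).det) :
    ∃ L : Matrix (Fin p) (Fin d) ℝ →L[ℝ] Matrix (Fin p) (Fin p) ℝ,
      HasFDerivAt (fun M : Matrix (Fin p) (Fin d) ℝ => M * (Mᵀ * M)⁻¹ * Mᵀ) L Γ ∧
      ∀ E : Matrix (Fin p) (Fin d) ℝ,
        L E = ((1 : Matrix (Fin p) (Fin p) ℝ) - Γ * (Γᵀ * Γ)⁻¹ * Γᵀ) * E * (Γᵀ * Γ)⁻¹ * Γᵀ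
          + Γ * (Γᵀ * Γ)⁻¹ * Eᵀ *
              ((1 : Matrix (Fin p) (Fin p) ℝ) - Γ * (Γᵀ * Γ)⁻¹ * Γᵀ) := by
  have hid := hasFDerivAt_id (𝕜 := ℝ) Γ
  have hproj := (hid.matrix_mul ((hid.matrix_transpose.matrix_mul hid).matrix_inv hrank)).matrix_mul
    hid.matrix_transpose
  refine ⟨_, hproj, fun E => ?_⟩
  set A := (Γᵀ * Γ)⁻¹
  change Γ * A * Eᵀ + (Γ * -(A * ((Γᵀ * E + Eᵀ * Γ) * A)) + E * A) * Γᵀ = _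
  simp only [Matrix.mul_add, Matrix.add_mul, Matrix.mul_sub, Matrix.sub_mul,
    Matrix.mul_neg, Matrix.neg_mul, Matrix.mul_one, Matrix.one_mul, Matrix.mul_assoc]
  abel

end Stmt9
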